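/- Let φ be a formula generated by the grammar φ ::= tt | ⟨a⟩φ | φ∧φ | φ∨φ, and let ⋁_{i=1}^k φ_i be the DNF of φ. If for every pair of indices 1 ≤ i, j ≤ k there is a process q with q ≲_S p_{φ_i}, q ≲_S p_{φ_j}, and q ⊨ φ, then there is a single process q such that q ≲_S p_{φ_i} for every 1 ≤ i ≤ k and q ⊨ φ. -/

import Mathlib

/-- Finite, loop-free CCS processes over the action set `Act`:
`p ::= 0 | a.p | p + p`. -/
inductive Proc (Act : Type) : Type
  | nil : Proc Act
  | pre : Act → Proc Act → Proc Act
  | plus : Proc Act → Proc Act → Proc Act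

/-- The transition relation: `a.p —a→ p`, and `p₁ + p₂ —a→ p'` iff
`p₁ —a→ p'` or `p₂ —a→ p'`. -/
inductive Step {Act : Type} : Proc Act → Act → Proc Act → Prop
  | pre (a : Act) (p : Proc Act) : Step (Proc.pre a p) a p
  | plusL : ∀ {p₁ p₂ p' : Proc Act} {a : Act},
      Step p₁ a p' → Step (Proc.plus p₁ p₂) a p'
  | plusR : ∀ {p₁ p₂ p' : Proc Act} {a : Act},
      Step p₂ a p' → Step (Proc.plus p₁ p₂) a p'

/-- HML formulas in negation normal form:
`φ ::= tt | ff | φ∧φ | φ∨φ | ⟨a⟩φ | [a]φ`. -/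
inductive HML (Act : Type) : Type
  | tt : HML Act
  | ff : HML Act
  | conj : HML Act → HML Act → HML Act
  | disj : HML Act → HML Act → HML Act
  | dia : Act → HML Act → HML Act
  | box : Act → HML Act → HML Act

/-- The satisfaction relation `p ⊨ φ`. -/
def Sat {Act : Type} : Proc Act → HML Act → Prop
  | _, HML.tt => True
  | _, HML.ff => False
  | p, HML.conj φ ψ => Sat p φ ∧ Sat p ψ
  | p, HML.disj φ ψ => Sat p φ ∨ Sat p ψ
  | p, HML.dia a φ => ∃ p', Step p a p' ∧ Sat p' φ
  | p, HML.box a φ => ∀ p', Step p a p' → Sat p' φ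

/-- `φ` entails `ψ` iff every process satisfying `φ` satisfies `ψ`. -/
def Entails {Act : Type} (φ ψ : HML Act) : Prop :=
  ∀ p : Proc Act, Sat p φ → Sat p ψ

/-- `R` is a simulation relation. -/
def IsSimulation {Act : Type} (R : Proc Act → Proc Act → Prop) : Prop :=
  ∀ p q, R p q → ∀ a p', Step p a p' → ∃ q', Step q a q' ∧ R p' q'

/-- The simulation preorder `≲_S`: the largest simulation. -/
def Sim {Act : Type} (p q : Proc Act) : Prop :=
  ∃ R, IsSimulation R ∧ R p q

/-- The set `I(p)` of initial actions of a process. -/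
def initials {Act : Type} (p : Proc Act) : Set Act :=
  {a | ∃ p', Step p a p'}

/-- Formulas generated by the grammar `φ ::= tt | ⟨a⟩φ | φ∧φ | φ∨φ`. -/
inductive InPos {Act : Type} : HML Act → Prop
  | tt : InPos HML.tt
  | dia : ∀ {a : Act} {φ : HML Act}, InPos φ → InPos (HML.dia a φ)
  | conj : ∀ {φ ψ : HML Act}, InPos φ → InPos ψ → InPos (HML.conj φ ψ)
  | disj : ∀ {φ ψ : HML Act}, InPos φ → InPos ψ → InPos (HML.disj φ ψ)

/-- The list of disjunction-free disjuncts of the disjunctive normal form,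
obtained by rewriting `⟨a⟩(ψ₁∨ψ₂)` to `⟨a⟩ψ₁ ∨ ⟨a⟩ψ₂` and distributing
conjunctions over disjunctions. -/
def dnfList {Act : Type} : HML Act → List (HML Act)
  | HML.tt => [HML.tt]
  | HML.ff => [HML.ff]
  | HML.conj φ ψ =>
      (dnfList φ).foldr (fun f acc => ((dnfList ψ).map (fun g => HML.conj f g)) ++ acc) []
  | HML.disj φ ψ => dnfList φ ++ dnfList ψ
  | HML.dia a φ => (dnfList φ).map (fun f => HML.dia a f)
  | HML.box a φ => [HML.box a φ]

/-- The process `p_φ` associated with a formula generated by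
`φ ::= tt | ⟨a⟩φ | φ∧φ`: `p_tt = 0`, `p_{⟨a⟩φ'} = a.p_{φ'}`,
`p_{φ₁∧φ₂} = p_{φ₁} + p_{φ₂}`. -/
def charProc {Act : Type} : HML Act → Proc Act
  | HML.dia a φ => Proc.pre a (charProc φ)
  | HML.conj φ ψ => Proc.plus (charProc φ) (charProc ψ)
  | _ => Proc.nil

section Aux

variable {Act : Type}

/-- Disjunction-free positive formulas. -/
inductive DF {Act : Type} : HML Act → Prop
  | tt : DF HML.tt
  | dia : ∀ {a : Act} {φ : HML Act}, DF φ → DF (HML.dia a φ)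
  | conj : ∀ {φ ψ : HML Act}, DF φ → DF ψ → DF (HML.conj φ ψ)

lemma DF.inPos {φ : HML Act} (h : DF φ) : InPos φ := by
  induction h with
  | tt => exact InPos.tt
  | dia _ ih => exact InPos.dia ih
  | conj _ _ ih1 ih2 => exact InPos.conj ih1 ih2

lemma sim_refl (p : Proc Act) : Sim p p :=
  ⟨Eq, by rintro p q rfl a p' hs; exact ⟨p', hs, rfl⟩, rfl⟩

lemma sim_step {p q : Proc Act} (h : Sim p q) {a : Act} {p' : Proc Act}
    (hs : Step p a p') : ∃ q', Step q a q' ∧ Sim p' q' := by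
  obtain ⟨R, hR, hpq⟩ := h
  obtain ⟨q', hq', hR'⟩ := hR p q hpq a p' hs
  exact ⟨q', hq', R, hR, hR'⟩

lemma sim_trans {p q r : Proc Act} (h1 : Sim p q) (h2 : Sim q r) : Sim p r := by
  refine ⟨fun x z => ∃ y, Sim x y ∧ Sim y z, ?_, q, h1, h2⟩
  rintro x z ⟨y, hxy, hyz⟩ a x' hs
  obtain ⟨y', hy', hxy'⟩ := sim_step hxy hs
  obtain ⟨z', hz', hyz'⟩ := sim_step hyz hy'
  exact ⟨z', hz', y', hxy', hyz'⟩

lemma sim_nil (q : Proc Act) : Sim Proc.nil q := by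
  refine ⟨fun x _ => x = Proc.nil, ?_, rfl⟩
  rintro p q rfl a p' hs
  cases hs

lemma sim_pre {q q' p : Proc Act} {a : Act} (hs : Step q a q') (h : Sim p q') :
    Sim (Proc.pre a p) q := by
  obtain ⟨R, hR, hpq⟩ := h
  refine ⟨fun x y => (x = Proc.pre a p ∧ y = q) ∨ R x y, ?_, Or.inl ⟨rfl, rfl⟩⟩
  rintro x y (⟨rfl, rfl⟩ | hxy) b x' hstep
  · cases hstep
    exact ⟨q', hs, Or.inr hpq⟩
  · obtain ⟨y', hy', hR'⟩ := hR x y hxy b x' hstep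
    exact ⟨y', hy', Or.inr hR'⟩

lemma sim_plus_of {p p' q : Proc Act} (h1 : Sim p q) (h2 : Sim p' q) :
    Sim (Proc.plus p p') q := by
  obtain ⟨R1, hR1, h1⟩ := h1
  obtain ⟨R2, hR2, h2⟩ := h2
  refine ⟨fun x y => (x = Proc.plus p p' ∧ y = q) ∨ R1 x y ∨ R2 x y, ?_,
    Or.inl ⟨rfl, rfl⟩⟩
  rintro x y (⟨rfl, rfl⟩ | hxy | hxy) b x' hstep
  · cases hstep with
    | plusL hs =>
        obtain ⟨y', hy', hR'⟩ := hR1 _ _ h1 b x' hs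
        exact ⟨y', hy', Or.inr (Or.inl hR')⟩
    | plusR hs =>
        obtain ⟨y', hy', hR'⟩ := hR2 _ _ h2 b x' hs
        exact ⟨y', hy', Or.inr (Or.inr hR')⟩
  · obtain ⟨y', hy', hR'⟩ := hR1 x y hxy b x' hstep
    exact ⟨y', hy', Or.inr (Or.inl hR')⟩
  · obtain ⟨y', hy', hR'⟩ := hR2 x y hxy b x' hstep
    exact ⟨y', hy', Or.inr (Or.inr hR')⟩

lemma sim_plus_left (p r : Proc Act) : Sim p (Proc.plus p r) := by
  refine ⟨fun x y => (x = p ∧ y = Proc.plus p r) ∨ x = y, ?_, Or.inl ⟨rfl, rfl⟩⟩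
  rintro x y (⟨rfl, rfl⟩ | rfl) a x' hs
  · exact ⟨x', Step.plusL hs, Or.inr rfl⟩
  · exact ⟨x', hs, Or.inr rfl⟩

lemma sim_plus_right (p r : Proc Act) : Sim r (Proc.plus p r) := by
  refine ⟨fun x y => (x = r ∧ y = Proc.plus p r) ∨ x = y, ?_, Or.inl ⟨rfl, rfl⟩⟩
  rintro x y (⟨rfl, rfl⟩ | rfl) a x' hs
  · exact ⟨x', Step.plusR hs, Or.inr rfl⟩
  · exact ⟨x', hs, Or.inr rfl⟩

lemma sat_mono {ψ : HML Act} (h : InPos ψ) :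
    ∀ {p q : Proc Act}, Sat p ψ → Sim p q → Sat q ψ := by
  induction h with
  | tt => intro p q _ _; trivial
  | dia _ ih =>
      rintro p q ⟨p', hs, hsat⟩ hsim
      obtain ⟨q', hq', hsim'⟩ := sim_step hsim hs
      exact ⟨q', hq', ih hsat hsim'⟩
  | conj _ _ ih1 ih2 =>
      rintro p q ⟨h1, h2⟩ hsim
      exact ⟨ih1 h1 hsim, ih2 h2 hsim⟩
  | disj _ _ ih1 ih2 =>
      rintro p q (h1 | h2) hsim
      · exact Or.inl (ih1 h1 hsim)
      · exact Or.inr (ih2 h2 hsim)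

lemma sat_charProc {ψ : HML Act} (h : DF ψ) : Sat (charProc ψ) ψ := by
  induction h with
  | tt => trivial
  | dia _ ih => exact ⟨_, Step.pre _ _, ih⟩
  | @conj φ₁ φ₂ h1 h2 ih1 ih2 =>
      exact ⟨sat_mono h1.inPos ih1 (sim_plus_left _ _),
        sat_mono h2.inPos ih2 (sim_plus_right _ _)⟩

lemma sim_charProc_of_sat {ψ : HML Act} (h : DF ψ) :
    ∀ {q : Proc Act}, Sat q ψ → Sim (charProc ψ) q := by
  induction h with
  | tt => intro q _; exact sim_nil q
  | dia _ ih =>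
      rintro q ⟨q', hs, hsat⟩
      exact sim_pre hs (ih hsat)
  | conj _ _ ih1 ih2 =>
      rintro q ⟨h1, h2⟩
      exact sim_plus_of (ih1 h1) (ih2 h2)

lemma mem_dnf_conj {φ ψ : HML Act} {χ : HML Act} :
    χ ∈ dnfList (HML.conj φ ψ) ↔
      ∃ f ∈ dnfList φ, ∃ g ∈ dnfList ψ, χ = HML.conj f g := by
  show χ ∈ (dnfList φ).foldr _ [] ↔ _
  induction dnfList φ with
  | nil => simp
  | cons a l ih => simp [ih]; aesop

lemma dnf_exists (φ : HML Act) : ∃ χ, χ ∈ dnfList φ := by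
  induction φ with
  | tt => exact ⟨_, List.mem_singleton.2 rfl⟩
  | ff => exact ⟨_, List.mem_singleton.2 rfl⟩
  | conj φ ψ ih1 ih2 =>
      obtain ⟨f, hf⟩ := ih1; obtain ⟨g, hg⟩ := ih2
      exact ⟨_, mem_dnf_conj.2 ⟨f, hf, g, hg, rfl⟩⟩
  | disj φ ψ ih1 ih2 =>
      obtain ⟨f, hf⟩ := ih1
      exact ⟨f, List.mem_append.2 (Or.inl hf)⟩
  | dia a φ ih =>
      obtain ⟨f, hf⟩ := ih
      exact ⟨_, List.mem_map.2 ⟨f, hf, rfl⟩⟩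
  | box a φ ih => exact ⟨_, List.mem_singleton.2 rfl⟩

lemma dnf_df {φ : HML Act} (h : InPos φ) : ∀ ψ ∈ dnfList φ, DF ψ := by
  induction h with
  | tt => intro ψ hψ; rw [List.mem_singleton.1 hψ]; exact DF.tt
  | dia _ ih =>
      intro ψ hψ
      obtain ⟨f, hf, rfl⟩ := List.mem_map.1 hψ
      exact DF.dia (ih f hf)
  | conj _ _ ih1 ih2 =>
      intro ψ hψ
      obtain ⟨f, hf, g, hg, rfl⟩ := mem_dnf_conj.1 hψ
      exact DF.conj (ih1 f hf) (ih2 g hg)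
  | disj _ _ ih1 ih2 =>
      intro ψ hψ
      rcases List.mem_append.1 hψ with h' | h'
      · exact ih1 ψ h'
      · exact ih2 ψ h'

lemma sat_dnf {φ : HML Act} (h : InPos φ) (q : Proc Act) :
    Sat q φ ↔ ∃ ψ ∈ dnfList φ, Sat q ψ := by
  induction h generalizing q with
  | tt => simp [dnfList, Sat]
  | @dia a φ' _ ih =>
      constructor
      · rintro ⟨p', hs, hsat⟩
        obtain ⟨ψ, hψ, hsat'⟩ := (ih p').1 hsat
        exact ⟨HML.dia a ψ, List.mem_map.2 ⟨ψ, hψ, rfl⟩, p', hs, hsat'⟩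
      · rintro ⟨χ, hχ, hsat⟩
        obtain ⟨ψ, hψ, rfl⟩ := List.mem_map.1 hχ
        obtain ⟨p', hs, hsat'⟩ := hsat
        exact ⟨p', hs, (ih p').2 ⟨ψ, hψ, hsat'⟩⟩
  | conj _ _ ih1 ih2 =>
      constructor
      · rintro ⟨h1, h2⟩
        obtain ⟨f, hf, hs1⟩ := (ih1 q).1 h1
        obtain ⟨g, hg, hs2⟩ := (ih2 q).1 h2
        exact ⟨_, mem_dnf_conj.2 ⟨f, hf, g, hg, rfl⟩, hs1, hs2⟩
      · rintro ⟨χ, hχ, hsat⟩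
        obtain ⟨f, hf, g, hg, rfl⟩ := mem_dnf_conj.1 hχ
        exact ⟨(ih1 q).2 ⟨f, hf, hsat.1⟩, (ih2 q).2 ⟨g, hg, hsat.2⟩⟩
  | disj _ _ ih1 ih2 =>
      constructor
      · rintro (h1 | h2)
        · obtain ⟨f, hf, hs⟩ := (ih1 q).1 h1
          exact ⟨f, List.mem_append.2 (Or.inl hf), hs⟩
        · obtain ⟨g, hg, hs⟩ := (ih2 q).1 h2
          exact ⟨g, List.mem_append.2 (Or.inr hg), hs⟩
      · rintro ⟨χ, hχ, hsat⟩
        rcases List.mem_append.1 hχ with h' | h'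
        · exact Or.inl ((ih1 q).2 ⟨χ, h', hsat⟩)
        · exact Or.inr ((ih2 q).2 ⟨χ, h', hsat⟩)

end Aux

/-- Let `φ` be generated by `φ ::= tt | ⟨a⟩φ | φ∧φ | φ∨φ` with DNF
`⋁_{i=1}^k φ_i`. If for every pair `i, j` there is a process `q` with
`q ≲_S p_{φ_i}`, `q ≲_S p_{φ_j}` and `q ⊨ φ`, then there is a single process
`q` with `q ≲_S p_{φ_i}` for every `i` and `q ⊨ φ`. -/
theorem common_lower_bound_of_pairs {Act : Type} [Fintype Act] [Nonempty Act]
    (φ : HML Act) (h : InPos φ)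
    (hpair : ∀ ψ₁ ∈ dnfList φ, ∀ ψ₂ ∈ dnfList φ,
      ∃ q : Proc Act, Sim q (charProc ψ₁) ∧ Sim q (charProc ψ₂) ∧ Sat q φ) :
    ∃ q : Proc Act, (∀ ψ ∈ dnfList φ, Sim q (charProc ψ)) ∧ Sat q φ := by
  have key : ∀ l : List (HML Act), (∀ ψ ∈ l, ψ ∈ dnfList φ) →
      ∃ k ∈ dnfList φ, ∀ ψ ∈ l, Sim (charProc k) (charProc ψ) := by
    intro l
    induction l with
    | nil =>
        intro _
        obtain ⟨k, hk⟩ := dnf_exists φ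
        exact ⟨k, hk, by simp⟩
    | cons ψ l ih =>
        intro hsub
        obtain ⟨k, hk, hkall⟩ := ih (fun x hx => hsub x (List.mem_cons_of_mem _ hx))
        have hψ : ψ ∈ dnfList φ := hsub ψ List.mem_cons_self
        obtain ⟨q, hq1, hq2, hqsat⟩ := hpair k hk ψ hψ
        obtain ⟨k', hk', hsatk'⟩ := (sat_dnf h q).1 hqsat
        have hsim : Sim (charProc k') q := sim_charProc_of_sat (dnf_df h k' hk') hsatk'
        refine ⟨k', hk', ?_⟩
        intro χ hχ
        rcases List.mem_cons.1 hχ with rfl | hχ'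
        · exact sim_trans hsim hq2
        · exact sim_trans (sim_trans hsim hq1) (hkall χ hχ')
  obtain ⟨k, hk, hall⟩ := key (dnfList φ) (fun _ hx => hx)
  refine ⟨charProc k, hall, (sat_dnf h _).2 ⟨k, hk, sat_charProc (dnf_df h k hk)⟩⟩
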